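/- For every R ∈ 𝔯(V): (1) Ric*(α_j(R)) = Ric(α_j(R)) for j = 1, 2; (2) Ric*(α_j(R)) = −Ric(α_j(R)) for j = 3, 4; (3) Ric*(α₅(R)) = 3·Ric(α₅(R)); (4) Ric*(α_j(R)) = 0 for j = 6, 7, 8; (5) the g-trace of Ric*(α_j(R)) vanishes for j = 2, …, 8. -/

import Mathlib

open scoped BigOperators
open Pointwise

namespace GCT

variable {V : Type*} [AddCommGroup V] [Module ℝ V]

/-- Linearity of a real valued function of one vector variable. -/
def IsLin (f : V → ℝ) : Prop :=
  (∀ x y : V, f (x + y) = f x + f y) ∧ (∀ (c : ℝ) (x : V), f (c • x) = c * f x)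

/-- Bilinearity. -/
def IsBilin (h : V → V → ℝ) : Prop :=
  (∀ y, IsLin (fun x => h x y)) ∧ (∀ x, IsLin (fun y => h x y))

/-- 4-linearity. -/
def IsMulti4 (F : V → V → V → V → ℝ) : Prop :=
  (∀ y z w, IsLin (fun x => F x y z w)) ∧ (∀ x z w, IsLin (fun y => F x y z w)) ∧
    (∀ x y w, IsLin (fun z => F x y z w)) ∧ (∀ x y z, IsLin (fun w => F x y z w))

/-- The space 𝔯(V) of generalized curvature tensors. -/
def rSet (V : Type*) [AddCommGroup V] [Module ℝ V] : Set (V → V → V → V → ℝ) :=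
  {F | IsMulti4 F ∧ (∀ x y z w, F x y z w = - F y x z w) ∧
    (∀ x y z w, F x y z w + F y z x w + F z x y w = 0)}

/-- The space 𝔞(V) of algebraic curvature tensors. -/
def aSet (V : Type*) [AddCommGroup V] [Module ℝ V] : Set (V → V → V → V → ℝ) :=
  {F | F ∈ rSet V ∧ ∀ x y z w, F x y z w = - F x y w z}

/-- The space 𝔰(V). -/
def sSet (V : Type*) [AddCommGroup V] [Module ℝ V] : Set (V → V → V → V → ℝ) :=
  {F | F ∈ rSet V ∧ ∀ x y z w, F x y z w = F x y w z}

/-- The conjugate tensor R*. -/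
def conj (F : V → V → V → V → ℝ) : V → V → V → V → ℝ := fun x y z w => - F x y w z

/-- The product h·k of two bilinear forms. -/
def prodB (h k : V → V → ℝ) : V → V → V → V → ℝ := fun x y z w => h x y * k z w

/-- The wedge product h ∧_t k of two bilinear forms. -/
def wedge (t : ℝ) (h k : V → V → ℝ) : V → V → V → V → ℝ :=
  fun x y z w => h x z * k y w - h y z * k x w - t * (h x w * k y z - h y w * k x z)

/-- Antisymmetric part Λh. -/
noncomputable def lamB (h : V → V → ℝ) : V → V → ℝ := fun x y => (h x y - h y x) / 2

/-- Symmetric part Sh. -/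
noncomputable def symB (h : V → V → ℝ) : V → V → ℝ := fun x y => (h x y + h y x) / 2

/-- The idempotent ψ. -/
noncomputable def psi (F : V → V → V → V → ℝ) : V → V → V → V → ℝ :=
  fun x y z w => (F x y z w + F y x w z + F z w x y + F w z y x) / 4

/-- The idempotent μ. -/
noncomputable def mu (F : V → V → V → V → ℝ) : V → V → V → V → ℝ :=
  fun x y z w =>
    (3 * F x y z w + 3 * F x y w z + F x w z y + F x z w y + F w y z x + F z y w x) / 8

/-- A linear equivalence is a g-isometry. -/
def IsIsometry (g : V → V → ℝ) (φ : V ≃ₗ[ℝ] V) : Prop := ∀ x y, g (φ x) (φ y) = g x y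

/-- Pull back of a 4-tensor along a linear equivalence (the natural action). -/
def pullT (φ : V ≃ₗ[ℝ] V) (F : V → V → V → V → ℝ) : V → V → V → V → ℝ :=
  fun x y z w => F (φ x) (φ y) (φ z) (φ w)

/-- Invariance of a set of 4-tensors under the orthogonal group O(V,g). -/
def OInv (g : V → V → ℝ) (S : Set (V → V → V → V → ℝ)) : Prop :=
  ∀ φ : V ≃ₗ[ℝ] V, IsIsometry g φ → ∀ F ∈ S, pullT φ F ∈ S

/-- Irreducibility of a subspace of 4-tensors as an O(V,g)-module:
there is no proper nonzero invariant subspace. -/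
def OIrred (g : V → V → ℝ) (W : Set (V → V → V → V → ℝ)) : Prop :=
  ∀ U : Submodule ℝ (V → V → V → V → ℝ), (U : Set (V → V → V → V → ℝ)) ⊆ W →
    (∀ φ : V ≃ₗ[ℝ] V, IsIsometry g φ → ∀ F ∈ U, pullT φ F ∈ U) →
    (U : Set (V → V → V → V → ℝ)) = {0} ∨ (U : Set (V → V → V → V → ℝ)) = W

/-- Isomorphism of two invariant subspaces as O(V,g)-modules. -/
def OEquivMod (g : V → V → ℝ) (S T : Set (V → V → V → V → ℝ)) : Prop :=
  ∃ e : (V → V → V → V → ℝ) →ₗ[ℝ] (V → V → V → V → ℝ),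
    Set.BijOn e S T ∧
      ∀ φ : V ≃ₗ[ℝ] V, IsIsometry g φ → ∀ F ∈ S, e (pullT φ F) = pullT φ (e F)

variable (n : ℕ) (b : Module.Basis (Fin n) ℝ V) (g : V → V → ℝ)

/-- Inverse metric components g^{ij}. -/
noncomputable def ginv : Matrix (Fin n) (Fin n) ℝ :=
  (Matrix.of fun i j => g (b i) (b j))⁻¹

/-- Ric(R)(x,y) := Σ g^{ij} R(e_i,x,y,e_j). -/
noncomputable def Ric (F : V → V → V → V → ℝ) : V → V → ℝ :=
  fun x y => ∑ i, ∑ j, ginv n b g i j * F (b i) x y (b j)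

/-- Ric*(R)(x,y) := Σ g^{ij} R(x,e_i,e_j,y). -/
noncomputable def RicS (F : V → V → V → V → ℝ) : V → V → ℝ :=
  fun x y => ∑ i, ∑ j, ginv n b g i j * F x (b i) (b j) y

/-- The generalized scalar curvature τ(R). -/
noncomputable def tau (F : V → V → V → V → ℝ) : ℝ :=
  ∑ i, ∑ j, ∑ k, ∑ l, ginv n b g i l * ginv n b g j k * F (b i) (b j) (b k) (b l)

/-- The g-trace of a bilinear form. -/
noncomputable def trg (h : V → V → ℝ) : ℝ := ∑ i, ∑ j, ginv n b g i j * h (b i) (b j)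

/-- The scalar product on 4-tensors given by full contraction with g. -/
noncomputable def inner4 (F T : V → V → V → V → ℝ) : ℝ :=
  ∑ i, ∑ j, ∑ k, ∑ l, ∑ i', ∑ j', ∑ k', ∑ l',
    ginv n b g i i' * ginv n b g j j' * ginv n b g k k' * ginv n b g l l' *
      F (b i) (b j) (b k) (b l) * T (b i') (b j') (b k') (b l')

/-- W-projection π₁. -/
noncomputable def pi1 (F : V → V → V → V → ℝ) : V → V → V → V → ℝ :=
  (-(tau n b g F) / ((n : ℝ) * ((n : ℝ) - 1))) • wedge 0 g g

/-- W-projection π₂. -/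
noncomputable def pi2 (F : V → V → V → V → ℝ) : V → V → V → V → ℝ :=
  ((1 : ℝ) / ((n : ℝ) - 1)) • wedge 0 (((tau n b g F) / (n : ℝ)) • g - symB (Ric n b g F)) g

/-- W-projection π₃. -/
noncomputable def pi3 (F : V → V → V → V → ℝ) : V → V → V → V → ℝ :=
  ((-1 : ℝ) / ((n : ℝ) + 1)) •
    ((2 : ℝ) • prodB (lamB (Ric n b g F)) g + wedge 0 (lamB (Ric n b g F)) g)

/-- W-projection π₄. -/
noncomputable def pi4 (F : V → V → V → V → ℝ) : V → V → V → V → ℝ :=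
  ((-1 : ℝ) / ((n : ℝ) ^ 2 - 4)) •
      ((2 : ℝ) • prodB (lamB (RicS n b g F)) g + wedge ((n : ℝ) + 1) (lamB (RicS n b g F)) g)
    - ((3 : ℝ) / (((n : ℝ) ^ 2 - 4) * ((n : ℝ) + 1))) •
      ((2 : ℝ) • prodB (lamB (Ric n b g F)) g + wedge ((n : ℝ) + 1) (lamB (Ric n b g F)) g)

/-- W-projection π₅. -/
noncomputable def pi5 (F : V → V → V → V → ℝ) : V → V → V → V → ℝ :=
  ((1 : ℝ) / (((n : ℝ) - 1) * ((n : ℝ) - 2))) •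
    ((tau n b g F) • wedge 0 g g -
      ((1 : ℝ) / (n : ℝ)) •
        wedge ((n : ℝ) - 1) (symB (Ric n b g F + ((n : ℝ) - 1) • RicS n b g F)) g)

/-- W-projection π₆. -/
noncomputable def pi6 (F : V → V → V → V → ℝ) : V → V → V → V → ℝ :=
  psi F + ((1 : ℝ) / (2 * ((n : ℝ) - 2))) • wedge 1 (symB (Ric n b g F + RicS n b g F)) g
    - ((tau n b g F) / (((n : ℝ) - 1) * ((n : ℝ) - 2))) • wedge 0 g g

/-- W-projection π₇. -/
noncomputable def pi7 (F : V → V → V → V → ℝ) : V → V → V → V → ℝ :=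
  mu F + ((1 : ℝ) / (2 * (n : ℝ))) • wedge (-1) (symB (Ric n b g F - RicS n b g F)) g
    + ((1 : ℝ) / (2 * ((n : ℝ) + 2))) • prodB (lamB ((3 : ℝ) • Ric n b g F - RicS n b g F)) g
    + ((1 : ℝ) / (4 * ((n : ℝ) + 2))) • wedge (-1) (lamB ((3 : ℝ) • Ric n b g F - RicS n b g F)) g

/-- W-projection π₈. -/
noncomputable def pi8 (F : V → V → V → V → ℝ) : V → V → V → V → ℝ :=
  F - psi F - mu F
    + ((1 : ℝ) / (2 * ((n : ℝ) - 2))) • prodB (lamB (Ric n b g F + RicS n b g F)) g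
    + ((1 : ℝ) / (4 * ((n : ℝ) - 2))) • wedge 3 (lamB (Ric n b g F + RicS n b g F)) g

/-- A-projection α₁. -/
noncomputable def al1 (F : V → V → V → V → ℝ) : V → V → V → V → ℝ :=
  (-(tau n b g F) / ((n : ℝ) * ((n : ℝ) - 1))) • wedge 0 g g

/-- A-projection α₂. -/
noncomputable def al2 (F : V → V → V → V → ℝ) : V → V → V → V → ℝ :=
  ((-1 : ℝ) / (2 * ((n : ℝ) - 2))) • wedge 1 (symB (Ric n b g F + RicS n b g F)) g
    + ((2 * tau n b g F) / ((n : ℝ) * ((n : ℝ) - 2))) • wedge 0 g g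

/-- A-projection α₃. -/
noncomputable def al3 (F : V → V → V → V → ℝ) : V → V → V → V → ℝ :=
  ((-1 : ℝ) / (2 * (n : ℝ))) • wedge (-1) (symB (Ric n b g F - RicS n b g F)) g

/-- A-projection α₄. -/
noncomputable def al4 (F : V → V → V → V → ℝ) : V → V → V → V → ℝ :=
  ((-1 : ℝ) / (4 * ((n : ℝ) + 2))) •
    ((2 : ℝ) • prodB (lamB ((3 : ℝ) • Ric n b g F - RicS n b g F)) g
      + wedge (-1) (lamB ((3 : ℝ) • Ric n b g F - RicS n b g F)) g)

/-- A-projection α₅. -/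
noncomputable def al5 (F : V → V → V → V → ℝ) : V → V → V → V → ℝ :=
  ((-1 : ℝ) / (4 * ((n : ℝ) - 2))) •
    ((2 : ℝ) • prodB (lamB (Ric n b g F + RicS n b g F)) g
      + wedge 3 (lamB (Ric n b g F + RicS n b g F)) g)

/-- A-projection α₆. -/
noncomputable def al6 (F : V → V → V → V → ℝ) : V → V → V → V → ℝ :=
  psi F - al1 n b g F - al2 n b g F

/-- A-projection α₇. -/
noncomputable def al7 (F : V → V → V → V → ℝ) : V → V → V → V → ℝ :=
  mu F - al3 n b g F - al4 n b g F

/-- A-projection α₈. -/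
noncomputable def al8 (F : V → V → V → V → ℝ) : V → V → V → V → ℝ :=
  F - mu F - psi F - al5 n b g F

/-- Curvature tensors of constant curvature type. -/
noncomputable def uSet : Set (V → V → V → V → ℝ) :=
  {F | ∃ c : ℝ, ∀ x y z w, F x y z w = c * (g x w * g y z - g x z * g y w)}

/-- Ricci traceless algebraic curvature tensors built from a traceless symmetric form. -/
noncomputable def zSet : Set (V → V → V → V → ℝ) :=
  {F | ∃ Xi : V → V → ℝ, IsBilin Xi ∧ (∀ x y, Xi x y = Xi y x) ∧ trg n b g Xi = 0 ∧
    ∀ x y z w, F x y z w = Xi x w * g y z + g x w * Xi y z - Xi x z * g y w - g x z * Xi y w}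

/-- Weyl type (Ricci flat algebraic) curvature tensors. -/
noncomputable def wSet : Set (V → V → V → V → ℝ) :=
  {F | F ∈ aSet V ∧ Ric n b g F = fun _ _ => 0}

/-- The projective curvature tensor p(R). -/
noncomputable def pProj (F : V → V → V → V → ℝ) : V → V → V → V → ℝ :=
  F - pi1 n b g F - pi2 n b g F - pi3 n b g F

/-!
Every contraction in sight is a `g`-trace `trg h = ∑ g^{ij} h(eᵢ, eⱼ)` in two slots of a
tensor, and since `(g^{ij})` inverts the Gram matrix, `trg (u, v ↦ g(u, x) f(v)) = f x` for
linear `f`. This computes `Ric` and `Ric*` of `h ∧ₜ g` and `h · g` as combinations of `h`, `g`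
and `trg h`, and, together with the first Bianchi identity for `μ`, `Ric*` of `ψ(R)` and `μ(R)`
in terms of `Ric(R)` and `Ric*(R)`. Each claim is then an identity between coefficients of
bilinear forms.
-/

namespace IsLin

variable {f f' : V → ℝ}

theorem add (hf : IsLin f) (hf' : IsLin f') : IsLin fun x => f x + f' x :=
  ⟨fun x y => by beta_reduce; rw [hf.1, hf'.1]; ring,
    fun c x => by beta_reduce; rw [hf.2, hf'.2]; ring⟩

theorem sub (hf : IsLin f) (hf' : IsLin f') : IsLin fun x => f x - f' x :=
  ⟨fun x y => by beta_reduce; rw [hf.1, hf'.1]; ring,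
    fun c x => by beta_reduce; rw [hf.2, hf'.2]; ring⟩

theorem const_mul (hf : IsLin f) (c : ℝ) : IsLin fun x => c * f x :=
  ⟨fun x y => by beta_reduce; rw [hf.1]; ring, fun d x => by beta_reduce; rw [hf.2]; ring⟩

theorem div_const (hf : IsLin f) (c : ℝ) : IsLin fun x => f x / c :=
  ⟨fun x y => by beta_reduce; rw [hf.1]; ring, fun d x => by beta_reduce; rw [hf.2]; ring⟩

theorem sum {ι : Type*} (s : Finset ι) {f : ι → V → ℝ} (hf : ∀ i, IsLin (f i)) :
    IsLin fun x => ∑ i ∈ s, f i x :=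
  ⟨fun x y => by simp only [(hf _).1, Finset.sum_add_distrib],
    fun c x => by simp only [(hf _).2, Finset.mul_sum]⟩

def toLinearMap (hf : IsLin f) : V →ₗ[ℝ] ℝ where
  toFun := f
  map_add' := hf.1
  map_smul' := hf.2

theorem eq_sum_repr (hf : IsLin f) {ι : Type*} [Fintype ι] (e : Module.Basis ι ℝ V) (x : V) :
    f x = ∑ i, e.repr x i * f (e i) := by
  change hf.toLinearMap x = ∑ i, e.repr x i * hf.toLinearMap (e i)
  conv_lhs => rw [← e.sum_repr x]
  simp only [map_sum, map_smul, smul_eq_mul]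

end IsLin

namespace IsBilin

variable {h k : V → V → ℝ}

theorem add (hh : IsBilin h) (hk : IsBilin k) : IsBilin (h + k) :=
  ⟨fun y => (hh.1 y).add (hk.1 y), fun x => (hh.2 x).add (hk.2 x)⟩

theorem sub (hh : IsBilin h) (hk : IsBilin k) : IsBilin (h - k) :=
  ⟨fun y => (hh.1 y).sub (hk.1 y), fun x => (hh.2 x).sub (hk.2 x)⟩

theorem smul (hh : IsBilin h) (c : ℝ) : IsBilin (c • h) :=
  ⟨fun y => (hh.1 y).const_mul c, fun x => (hh.2 x).const_mul c⟩

theorem symB (hh : IsBilin h) : IsBilin (symB h) :=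
  ⟨fun y => ((hh.1 y).add (hh.2 y)).div_const 2, fun x => ((hh.2 x).add (hh.1 x)).div_const 2⟩

theorem lamB (hh : IsBilin h) : IsBilin (lamB h) :=
  ⟨fun y => ((hh.1 y).sub (hh.2 y)).div_const 2, fun x => ((hh.2 x).sub (hh.1 x)).div_const 2⟩

end IsBilin

theorem lamB_swap {α : Type*} (h : α → α → ℝ) (x y : α) : lamB h y x = -lamB h x y := by
  simp only [lamB]; ring

theorem isBilin_Ric {F : V → V → V → V → ℝ} (hF : IsMulti4 F) : IsBilin (Ric n b g F) :=
  ⟨fun y => IsLin.sum _ fun i => IsLin.sum _ fun j => (hF.2.1 (b i) y (b j)).const_mul _,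
    fun x => IsLin.sum _ fun i => IsLin.sum _ fun j => (hF.2.2.1 (b i) x (b j)).const_mul _⟩

theorem isBilin_RicS {F : V → V → V → V → ℝ} (hF : IsMulti4 F) : IsBilin (RicS n b g F) :=
  ⟨fun y => IsLin.sum _ fun i => IsLin.sum _ fun j => (hF.1 (b i) (b j) y).const_mul _,
    fun x => IsLin.sum _ fun i => IsLin.sum _ fun j => (hF.2.2.2 x (b i) (b j)).const_mul _⟩

structure IsMetric (g : V → V → ℝ) : Prop where
  bilin : IsBilin g
  symm : ∀ x y, g x y = g y x
  nondeg : ∀ x, (∀ y, g x y = 0) → x = 0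

open scoped Matrix

noncomputable def gram : Matrix (Fin n) (Fin n) ℝ := Matrix.of fun i j => g (b i) (b j)

theorem ginv_eq_inv_gram : ginv n b g = (gram n b g)⁻¹ := rfl

variable {n b g}

theorem vecMul_gram (hgb : IsBilin g) (x : V) : b.repr x ᵥ* gram n b g = fun i => g x (b i) := by
  funext i
  rw [(hgb.1 (b i)).eq_sum_repr b x]
  rfl

theorem isUnit_det_gram (hgb : IsBilin g) (hgnd : ∀ x : V, (∀ y : V, g x y = 0) → x = 0) :
    IsUnit (gram n b g).det := by
  rw [isUnit_iff_ne_zero, Ne, ← Matrix.exists_vecMul_eq_zero_iff]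
  rintro ⟨w, hw0, hw⟩
  set x := b.equivFun.symm w
  have hrepr : ⇑(b.repr x) = w := by rw [← b.equivFun_apply, b.equivFun.apply_symm_apply]
  have hx : x = 0 := hgnd x fun y => by
    have hgx := vecMul_gram (b := b) hgb x
    rw [hrepr, hw] at hgx
    simp [(hgb.2 x).eq_sum_repr b y, ← congrFun hgx]
  exact hw0 (by rw [← hrepr, hx, map_zero, Finsupp.coe_zero])

theorem ginv_comm (hgs : ∀ x y, g x y = g y x) (i j : Fin n) :
    ginv n b g i j = ginv n b g j i := by
  have hsymm : (gram n b g).IsSymm := by ext i j; exact hgs _ _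
  exact (hsymm.inv.apply i j).symm

theorem trg_add (h k : V → V → ℝ) : trg n b g (h + k) = trg n b g h + trg n b g k := by
  simp only [trg, Pi.add_apply, mul_add, Finset.sum_add_distrib]

theorem trg_sub (h k : V → V → ℝ) : trg n b g (h - k) = trg n b g h - trg n b g k := by
  simp only [trg, Pi.sub_apply, mul_sub, Finset.sum_sub_distrib]

theorem trg_smul (c : ℝ) (h : V → V → ℝ) : trg n b g (c • h) = c * trg n b g h := by
  simp only [trg, Finset.mul_sum]
  exact Finset.sum_congr rfl fun i _ => Finset.sum_congr rfl fun j _ => by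
    simp only [Pi.smul_apply, smul_eq_mul]; ring

theorem trg_neg (h : V → V → ℝ) : trg n b g (-h) = -trg n b g h := by
  simp only [trg, Pi.neg_apply, mul_neg, Finset.sum_neg_distrib]

theorem trg_zero : trg n b g (0 : V → V → ℝ) = 0 := by
  simp [trg]

theorem trg_swap (hgs : ∀ x y, g x y = g y x) (h : V → V → ℝ) :
    trg n b g (fun u v => h v u) = trg n b g h := by
  rw [trg, Finset.sum_comm]
  exact Finset.sum_congr rfl fun i _ => Finset.sum_congr rfl fun j _ => by rw [ginv_comm hgs]

theorem trg_eq_zero_of_antisymm (hgs : ∀ x y, g x y = g y x) {h : V → V → ℝ}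
    (hh : ∀ u v, h u v = -h v u) : trg n b g h = 0 := by
  have hswap : (fun u v => h v u) = -h := by
    funext u v; rw [Pi.neg_apply, Pi.neg_apply, hh u v, neg_neg]
  have : trg n b g h = -trg n b g h := by rw [← trg_neg, ← hswap, trg_swap hgs]
  linarith

theorem trg_lamB (hgs : ∀ x y, g x y = g y x) (h : V → V → ℝ) : trg n b g (lamB h) = 0 :=
  trg_eq_zero_of_antisymm hgs fun u v => lamB_swap h v u

theorem trg_symB (hgs : ∀ x y, g x y = g y x) (h : V → V → ℝ) :
    trg n b g (symB h) = trg n b g h := by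
  have : symB h = (1 / 2 : ℝ) • (h + fun u v => h v u) := by
    funext u v; simp only [symB, Pi.smul_apply, Pi.add_apply, smul_eq_mul]; ring
  rw [this, trg_smul, trg_add, trg_swap hgs]
  ring

theorem trg_self (hg : IsMetric g) : trg n b g g = n := by
  have h1 : (gram n b g)⁻¹ * gram n b g = 1 :=
    Matrix.nonsing_inv_mul _ (isUnit_det_gram hg.bilin hg.nondeg)
  calc trg n b g g = Matrix.trace ((gram n b g)⁻¹ * gram n b g) := by
        simp only [trg, Matrix.trace, Matrix.diag, Matrix.mul_apply, ginv_eq_inv_gram]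
        exact Finset.sum_congr rfl fun i _ => Finset.sum_congr rfl fun j _ => by
          rw [gram, Matrix.of_apply, hg.symm]
    _ = n := by simp [h1]

theorem trg_g_mul (hg : IsMetric g) {f : V → ℝ} (hf : IsLin f) (x : V) :
    trg n b g (fun u v => g u x * f v) = f x := by
  have hx : (fun i => g (b i) x) ᵥ* ginv n b g = b.repr x := by
    have : (fun i => g (b i) x) = b.repr x ᵥ* gram n b g := by
      rw [vecMul_gram hg.bilin]; funext i; exact hg.symm _ _
    rw [this, Matrix.vecMul_vecMul, ginv_eq_inv_gram,
      Matrix.mul_nonsing_inv _ (isUnit_det_gram hg.bilin hg.nondeg), Matrix.vecMul_one]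
  calc trg n b g (fun u v => g u x * f v)
      = ∑ j, ((fun i => g (b i) x) ᵥ* ginv n b g) j * f (b j) := by
        simp only [trg, Matrix.vecMul, dotProduct, Finset.sum_mul]
        rw [Finset.sum_comm]
        exact Finset.sum_congr rfl fun j _ => Finset.sum_congr rfl fun i _ => by ring
    _ = f x := by rw [hx, ← hf.eq_sum_repr]

theorem trg_mul_g (hg : IsMetric g) {f : V → ℝ} (hf : IsLin f) (x : V) :
    trg n b g (fun u v => f u * g x v) = f x := by
  rw [← trg_g_mul hg hf x, ← trg_swap hg.symm]
  congr 1; funext u v; rw [hg.symm x u, mul_comm]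

theorem Ric_add (F F' : V → V → V → V → ℝ) :
    Ric n b g (F + F') = Ric n b g F + Ric n b g F' := by
  funext x y; exact trg_add (fun u v => F u x y v) (fun u v => F' u x y v)

theorem Ric_smul (c : ℝ) (F : V → V → V → V → ℝ) :
    Ric n b g (c • F) = c • Ric n b g F := by
  funext x y; exact trg_smul c (fun u v => F u x y v)

theorem RicS_add (F F' : V → V → V → V → ℝ) :
    RicS n b g (F + F') = RicS n b g F + RicS n b g F' := by
  funext x y; exact trg_add (fun u v => F x u v y) (fun u v => F' x u v y)

theorem RicS_sub (F F' : V → V → V → V → ℝ) :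
    RicS n b g (F - F') = RicS n b g F - RicS n b g F' := by
  funext x y; exact trg_sub (fun u v => F x u v y) (fun u v => F' x u v y)

theorem RicS_smul (c : ℝ) (F : V → V → V → V → ℝ) :
    RicS n b g (c • F) = c • RicS n b g F := by
  funext x y; exact trg_smul c (fun u v => F x u v y)

theorem trg_Ric (F : V → V → V → V → ℝ) : trg n b g (Ric n b g F) = tau n b g F := by
  simp only [trg, Ric, tau, Finset.mul_sum]
  conv_lhs => enter [2, j]; rw [Finset.sum_comm]
  rw [Finset.sum_comm]
  exact Finset.sum_congr rfl fun i _ => Finset.sum_congr rfl fun j _ =>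
    Finset.sum_congr rfl fun k _ => Finset.sum_congr rfl fun l _ => by ring

theorem trg_RicS (F : V → V → V → V → ℝ) : trg n b g (RicS n b g F) = tau n b g F := by
  simp only [trg, RicS, tau, Finset.mul_sum]
  refine Finset.sum_congr rfl fun i _ => ?_
  rw [Finset.sum_comm]
  refine Finset.sum_congr rfl fun j _ => ?_
  rw [Finset.sum_comm]
  exact Finset.sum_congr rfl fun k _ => Finset.sum_congr rfl fun l _ => by ring

theorem Ric_wedge (hg : IsMetric g) (t : ℝ) {h : V → V → ℝ} (hh : IsBilin h) :
    Ric n b g (wedge t h g) = (1 - n + t) • h - (t * trg n b g h) • g := by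
  funext x y
  have hsplit : (fun u v => wedge t h g u x y v) = (fun u v => h u y * g x v) - h x y • g
      - (t * g x y) • h + t • fun u v => g u y * h x v := by
    funext u v; simp only [wedge, Pi.add_apply, Pi.sub_apply, Pi.smul_apply, smul_eq_mul]; ring
  change trg n b g (fun u v => wedge t h g u x y v) = _
  rw [hsplit, trg_add, trg_sub, trg_sub, trg_smul, trg_smul, trg_smul,
    trg_mul_g hg (hh.1 y), trg_self hg, trg_g_mul hg (hh.2 x)]
  simp only [Pi.sub_apply, Pi.smul_apply, smul_eq_mul]
  ring

theorem RicS_wedge (hg : IsMetric g) (t : ℝ) {h : V → V → ℝ} (hh : IsBilin h) :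
    RicS n b g (wedge t h g) = (1 - t * (n - 1)) • h - trg n b g h • g := by
  funext x y
  have hsplit : (fun u v => wedge t h g x u v y) = (fun u v => g u y * h x v) - g x y • h
      - (t * h x y) • g + t • fun u v => h u y * g x v := by
    funext u v; simp only [wedge, Pi.add_apply, Pi.sub_apply, Pi.smul_apply, smul_eq_mul]; ring
  change trg n b g (fun u v => wedge t h g x u v y) = _
  rw [hsplit, trg_add, trg_sub, trg_sub, trg_smul, trg_smul, trg_smul,
    trg_g_mul hg (hh.2 x), trg_self hg, trg_mul_g hg (hh.1 y)]
  simp only [Pi.sub_apply, Pi.smul_apply, smul_eq_mul]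
  ring

theorem Ric_prodB (hg : IsMetric g) {h : V → V → ℝ} (hh : IsBilin h) :
    Ric n b g (prodB h g) = fun x y => h y x := by
  funext x y; exact trg_mul_g hg (hh.1 x) y

theorem RicS_prodB (hg : IsMetric g) {h : V → V → ℝ} (hh : IsBilin h) :
    RicS n b g (prodB h g) = h := by
  funext x y
  change trg n b g (fun u v => h x u * g v y) = h x y
  simp only [hg.symm _ y]
  exact trg_mul_g hg (hh.2 x) y

variable {F : V → V → V → V → ℝ}

theorem trg_contract12 (hgs : ∀ x y, g x y = g y x)
    (hanti : ∀ x y z w, F x y z w = -F y x z w) (x y : V) :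
    trg n b g (fun u v => F u v x y) = 0 :=
  trg_eq_zero_of_antisymm hgs fun u v => hanti u v x y

theorem trg_contract24 (hanti : ∀ x y z w, F x y z w = -F y x z w) (x y : V) :
    trg n b g (fun u v => F x u y v) = -Ric n b g F x y := by
  simp only [hanti x]
  exact trg_neg (fun u v => F u x y v)

theorem trg_contract34 (hanti : ∀ x y z w, F x y z w = -F y x z w)
    (hbianchi : ∀ x y z w, F x y z w + F y z x w + F z x y w = 0) (x y : V) :
    trg n b g (fun u v => F x y u v) = Ric n b g F y x - Ric n b g F x y := by
  have hsplit : (fun u v => F x y u v) = (fun u v => F u y x v) - fun u v => F u x y v := by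
    funext u v
    have := hbianchi x y u v
    rw [hanti y u] at this
    simp only [Pi.sub_apply]
    linarith
  rw [hsplit]
  exact trg_sub _ _

theorem RicS_psi (hgs : ∀ x y, g x y = g y x) (x y : V) :
    RicS n b g (psi F) x y =
      (Ric n b g F x y + Ric n b g F y x + RicS n b g F x y + RicS n b g F y x) / 4 := by
  have hsplit : (fun u v => psi F x u v y) = (1 / 4 : ℝ) • ((fun u v => F x u v y)
      + (fun u v => F u x y v) + (fun u v => F v y x u) + fun u v => F y v u x) := by
    funext u v; simp only [psi, Pi.smul_apply, Pi.add_apply, smul_eq_mul]; ring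
  change trg n b g (fun u v => psi F x u v y) = _
  rw [hsplit, trg_smul, trg_add, trg_add, trg_add, trg_swap hgs (fun u v => F u y x v),
    trg_swap hgs (fun u v => F y u v x)]
  change 1 / 4 * (RicS n b g F x y + Ric n b g F x y + Ric n b g F y x + RicS n b g F y x) = _
  ring

theorem RicS_mu (hgs : ∀ x y, g x y = g y x) (hanti : ∀ x y z w, F x y z w = -F y x z w)
    (hbianchi : ∀ x y z w, F x y z w + F y z x w + F z x y w = 0) (x y : V) :
    RicS n b g (mu F) x y =
      (3 * RicS n b g F x y - 5 * Ric n b g F x y + Ric n b g F y x + RicS n b g F y x) / 8 := by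
  have hsplit : (fun u v => mu F x u v y) = (1 / 8 : ℝ) • ((3 : ℝ) • (fun u v => F x u v y)
      + (3 : ℝ) • (fun u v => F x u y v) + (fun u v => F x y v u) + (fun u v => F x v y u)
      + (fun u v => F y u v x) + fun u v => F v u y x) := by
    funext u v; simp only [mu, Pi.smul_apply, Pi.add_apply, smul_eq_mul]; ring
  change trg n b g (fun u v => mu F x u v y) = _
  rw [hsplit, trg_smul, trg_add, trg_add, trg_add, trg_add, trg_add, trg_smul, trg_smul,
    trg_swap hgs (fun u v => F x y u v), trg_swap hgs (fun u v => F x u y v),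
    trg_swap hgs (fun u v => F u v y x), trg_contract24 hanti, trg_contract34 hanti hbianchi,
    trg_contract12 hgs hanti]
  change 1 / 8 * (3 * RicS n b g F x y + 3 * -Ric n b g F x y
    + (Ric n b g F y x - Ric n b g F x y) + -Ric n b g F x y + RicS n b g F y x + 0) = _
  ring

theorem trg_symB_Ric_add_RicS (hgs : ∀ x y, g x y = g y x) (F : V → V → V → V → ℝ) :
    trg n b g (symB (Ric n b g F + RicS n b g F)) = 2 * tau n b g F := by
  rw [trg_symB hgs, trg_add, trg_Ric, trg_RicS]; ring

theorem trg_symB_Ric_sub_RicS (hgs : ∀ x y, g x y = g y x) (F : V → V → V → V → ℝ) :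
    trg n b g (symB (Ric n b g F - RicS n b g F)) = 0 := by
  rw [trg_symB hgs, trg_sub, trg_Ric, trg_RicS, sub_self]

variable {h : V → V → ℝ}

theorem RicS_wedge_zero_self (hg : IsMetric g) :
    RicS n b g (wedge 0 g g) = Ric n b g (wedge 0 g g) := by
  rw [RicS_wedge hg 0 hg.bilin, Ric_wedge hg 0 hg.bilin, trg_self hg]
  module

theorem RicS_wedge_one (hg : IsMetric g) (hh : IsBilin h) :
    RicS n b g (wedge 1 h g) = Ric n b g (wedge 1 h g) := by
  rw [RicS_wedge hg 1 hh, Ric_wedge hg 1 hh]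
  module

theorem RicS_wedge_neg_one (hg : IsMetric g) (hh : IsBilin h) :
    RicS n b g (wedge (-1) h g) = -Ric n b g (wedge (-1) h g) := by
  rw [RicS_wedge hg (-1) hh, Ric_wedge hg (-1) hh]
  module

theorem Ric_prodB_lamB (hg : IsMetric g) (hh : IsBilin h) :
    Ric n b g (prodB (lamB h) g) = -lamB h := by
  rw [Ric_prodB hg hh.lamB]
  funext x y
  exact lamB_swap h x y

theorem RicS_prodB_lamB (hg : IsMetric g) (hh : IsBilin h) :
    RicS n b g (prodB (lamB h) g) = -Ric n b g (prodB (lamB h) g) := by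
  rw [RicS_prodB hg hh.lamB, Ric_prodB_lamB hg hh, neg_neg]

theorem RicS_al1_eq_Ric (hg : IsMetric g) (F : V → V → V → V → ℝ) :
    RicS n b g (al1 n b g F) = Ric n b g (al1 n b g F) := by
  rw [al1, RicS_smul, Ric_smul, RicS_wedge_zero_self hg]

theorem RicS_al2_eq_Ric (hg : IsMetric g) (hF : IsMulti4 F) :
    RicS n b g (al2 n b g F) = Ric n b g (al2 n b g F) := by
  rw [al2, RicS_add, Ric_add, RicS_smul, Ric_smul, RicS_smul, Ric_smul,
    RicS_wedge_one hg ((isBilin_Ric n b g hF).add (isBilin_RicS n b g hF)).symB,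
    RicS_wedge_zero_self hg]

theorem RicS_al3_eq_neg_Ric (hg : IsMetric g) (hF : IsMulti4 F) :
    RicS n b g (al3 n b g F) = -Ric n b g (al3 n b g F) := by
  rw [al3, RicS_smul, Ric_smul,
    RicS_wedge_neg_one hg ((isBilin_Ric n b g hF).sub (isBilin_RicS n b g hF)).symB, smul_neg]

theorem RicS_al4_eq_neg_Ric (hg : IsMetric g) (hF : IsMulti4 F) :
    RicS n b g (al4 n b g F) = -Ric n b g (al4 n b g F) := by
  have hh := ((isBilin_Ric n b g hF).smul 3).sub (isBilin_RicS n b g hF)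
  rw [al4, RicS_smul, Ric_smul, RicS_add, Ric_add, RicS_smul, Ric_smul,
    RicS_prodB_lamB hg hh, RicS_wedge_neg_one hg hh.lamB]
  module

theorem RicS_al5_eq_three_smul_Ric (hg : IsMetric g) (hF : IsMulti4 F) :
    RicS n b g (al5 n b g F) = (3 : ℝ) • Ric n b g (al5 n b g F) := by
  have hh := (isBilin_Ric n b g hF).add (isBilin_RicS n b g hF)
  rw [al5, RicS_smul, Ric_smul, RicS_add, Ric_add, RicS_smul, Ric_smul,
    RicS_prodB hg hh.lamB, Ric_prodB_lamB hg hh, RicS_wedge hg 3 hh.lamB, Ric_wedge hg 3 hh.lamB,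
    trg_lamB hg.symm]
  module

theorem RicS_al6_eq_zero (hg : IsMetric g) (hF : IsMulti4 F) (hn : 3 ≤ n) :
    RicS n b g (al6 n b g F) = 0 := by
  have hn' : (3 : ℝ) ≤ n := by exact_mod_cast hn
  have hn0 : (n : ℝ) ≠ 0 := by positivity
  have hn1 : (n : ℝ) - 1 ≠ 0 := by linarith
  have hn2 : (n : ℝ) - 2 ≠ 0 := by linarith
  rw [al6, al1, al2, RicS_sub, RicS_sub, RicS_add, RicS_smul, RicS_smul, RicS_smul,
    RicS_wedge hg 0 hg.bilin,
    RicS_wedge hg 1 ((isBilin_Ric n b g hF).add (isBilin_RicS n b g hF)).symB,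
    trg_self hg, trg_symB_Ric_add_RicS hg.symm]
  funext x y
  simp only [Pi.sub_apply, Pi.add_apply, Pi.smul_apply, smul_eq_mul, Pi.zero_apply,
    RicS_psi hg.symm, symB]
  field_simp
  ring

theorem RicS_al7_eq_zero (hg : IsMetric g) (hF : F ∈ rSet V) (hn : n ≠ 0) :
    RicS n b g (al7 n b g F) = 0 := by
  obtain ⟨hm, hanti, hbianchi⟩ := hF
  have hn0 : (n : ℝ) ≠ 0 := by exact_mod_cast hn
  have hn2 : (n : ℝ) + 2 ≠ 0 := by positivity
  rw [al7, al3, al4, RicS_sub, RicS_sub, RicS_smul, RicS_smul, RicS_add, RicS_smul,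
    RicS_prodB hg (((isBilin_Ric n b g hm).smul 3).sub (isBilin_RicS n b g hm)).lamB,
    RicS_wedge hg (-1) ((isBilin_Ric n b g hm).sub (isBilin_RicS n b g hm)).symB,
    RicS_wedge hg (-1) (((isBilin_Ric n b g hm).smul 3).sub (isBilin_RicS n b g hm)).lamB,
    trg_symB_Ric_sub_RicS hg.symm, trg_lamB hg.symm]
  funext x y
  simp only [Pi.sub_apply, Pi.add_apply, Pi.smul_apply, smul_eq_mul, Pi.zero_apply,
    RicS_mu hg.symm hanti hbianchi, symB, lamB]
  field_simp
  ring

theorem RicS_al8_eq_zero (hg : IsMetric g) (hF : F ∈ rSet V) (hn : n ≠ 2) :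
    RicS n b g (al8 n b g F) = 0 := by
  obtain ⟨hm, hanti, hbianchi⟩ := hF
  have hn2 : (n : ℝ) - 2 ≠ 0 := sub_ne_zero.mpr (by exact_mod_cast hn)
  have hh := (isBilin_Ric n b g hm).add (isBilin_RicS n b g hm)
  rw [al8, al5, RicS_sub, RicS_sub, RicS_sub, RicS_smul, RicS_add, RicS_smul,
    RicS_prodB hg hh.lamB, RicS_wedge hg 3 hh.lamB, trg_lamB hg.symm]
  funext x y
  simp only [Pi.sub_apply, Pi.add_apply, Pi.smul_apply, smul_eq_mul, Pi.zero_apply,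
    RicS_mu hg.symm hanti hbianchi, RicS_psi hg.symm, lamB]
  field_simp
  ring

theorem trg_RicS_al2_eq_zero (hg : IsMetric g) (hF : IsMulti4 F) (hn0 : n ≠ 0) (hn2 : n ≠ 2) :
    trg n b g (RicS n b g (al2 n b g F)) = 0 := by
  have hn0' : (n : ℝ) ≠ 0 := by exact_mod_cast hn0
  have hn2' : (n : ℝ) - 2 ≠ 0 := sub_ne_zero.mpr (by exact_mod_cast hn2)
  rw [al2, RicS_add, RicS_smul, RicS_smul,
    RicS_wedge hg 1 ((isBilin_Ric n b g hF).add (isBilin_RicS n b g hF)).symB,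
    RicS_wedge hg 0 hg.bilin, trg_add, trg_smul, trg_smul, trg_sub, trg_sub, trg_smul, trg_smul,
    trg_smul, trg_smul, trg_self hg, trg_symB_Ric_add_RicS hg.symm]
  field_simp
  ring

theorem trg_RicS_al3_eq_zero (hg : IsMetric g) (hF : IsMulti4 F) :
    trg n b g (RicS n b g (al3 n b g F)) = 0 := by
  rw [al3, RicS_smul,
    RicS_wedge hg (-1) ((isBilin_Ric n b g hF).sub (isBilin_RicS n b g hF)).symB,
    trg_smul, trg_sub, trg_smul, trg_smul, trg_self hg]
  ring

theorem trg_RicS_al4_eq_zero (hg : IsMetric g) (hF : IsMulti4 F) :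
    trg n b g (RicS n b g (al4 n b g F)) = 0 := by
  have hh := ((isBilin_Ric n b g hF).smul 3).sub (isBilin_RicS n b g hF)
  rw [al4, RicS_smul, RicS_add, RicS_smul, RicS_prodB hg hh.lamB, RicS_wedge hg (-1) hh.lamB,
    trg_smul, trg_add, trg_smul, trg_sub, trg_smul, trg_smul, trg_lamB hg.symm]
  ring

theorem trg_RicS_al5_eq_zero (hg : IsMetric g) (hF : IsMulti4 F) :
    trg n b g (RicS n b g (al5 n b g F)) = 0 := by
  have hh := (isBilin_Ric n b g hF).add (isBilin_RicS n b g hF)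
  rw [al5, RicS_smul, RicS_add, RicS_smul, RicS_prodB hg hh.lamB, RicS_wedge hg 3 hh.lamB,
    trg_smul, trg_add, trg_smul, trg_sub, trg_smul, trg_smul, trg_lamB hg.symm]
  ring

theorem stmt13 {V : Type*} [AddCommGroup V] [Module ℝ V]
    (n : ℕ) (hn : 3 ≤ n) (b : Module.Basis (Fin n) ℝ V)
    (g : V → V → ℝ) (hgb : IsBilin g) (hgs : ∀ x y, g x y = g y x)
    (hgnd : ∀ x : V, (∀ y : V, g x y = 0) → x = 0) :
    ∀ F ∈ rSet V,
      RicS n b g (al1 n b g F) = Ric n b g (al1 n b g F) ∧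
      RicS n b g (al2 n b g F) = Ric n b g (al2 n b g F) ∧
      RicS n b g (al3 n b g F) = - Ric n b g (al3 n b g F) ∧
      RicS n b g (al4 n b g F) = - Ric n b g (al4 n b g F) ∧
      RicS n b g (al5 n b g F) = (3 : ℝ) • Ric n b g (al5 n b g F) ∧
      RicS n b g (al6 n b g F) = 0 ∧ RicS n b g (al7 n b g F) = 0 ∧
      RicS n b g (al8 n b g F) = 0 ∧
      trg n b g (RicS n b g (al2 n b g F)) = 0 ∧ trg n b g (RicS n b g (al3 n b g F)) = 0 ∧
      trg n b g (RicS n b g (al4 n b g F)) = 0 ∧ trg n b g (RicS n b g (al5 n b g F)) = 0 ∧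
      trg n b g (RicS n b g (al6 n b g F)) = 0 ∧ trg n b g (RicS n b g (al7 n b g F)) = 0 ∧
      trg n b g (RicS n b g (al8 n b g F)) = 0 := by
  intro F hF
  have hg : IsMetric g := ⟨hgb, hgs, hgnd⟩
  have hm : IsMulti4 F := hF.1
  have h6 := RicS_al6_eq_zero (b := b) hg hm hn
  have h7 := RicS_al7_eq_zero (b := b) hg hF (by omega)
  have h8 := RicS_al8_eq_zero (b := b) hg hF (by omega)
  exact ⟨RicS_al1_eq_Ric hg F, RicS_al2_eq_Ric hg hm, RicS_al3_eq_neg_Ric hg hm,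
    RicS_al4_eq_neg_Ric hg hm, RicS_al5_eq_three_smul_Ric hg hm, h6, h7, h8,
    trg_RicS_al2_eq_zero hg hm (by omega) (by omega), trg_RicS_al3_eq_zero hg hm,
    trg_RicS_al4_eq_zero hg hm, trg_RicS_al5_eq_zero hg hm,
    by rw [h6, trg_zero], by rw [h7, trg_zero], by rw [h8, trg_zero]⟩

end GCT
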